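/- arXiv:0808.0228 — 3 statements merged into one kernel-verified Lean document; each statement's English description precedes it below -/
import Mathlib

section
/- Let G be a self-adjoint operator on a Hilbert space, L a finite-dimensional subspace of Dom(G), and λ ∈ ℂ with nonzero imaginary part. Suppose there exists a nonzero v ∈ L such that ⟨(λ - G)v, (conj(λ) - G)w⟩ = 0 for all w ∈ L. Then dist(Re λ, Spec(G)) ≤ |Im λ|; in particular the interval [Re λ - |Im λ|, Re λ + |Im λ|] intersects Spec(G). -/
/-!
Write `λ = a + ib`. Testing the weak equation with `w = v` and taking real parts, the cross
terms are purely imaginary and one gets `‖(a - G)v‖ = |b| ‖v‖`. On the other hand, for real `a`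
the continuous functional calculus gives `(G - a)² ≥ dist(a, Spec G)²`, hence
`dist(a, Spec G) ‖v‖ ≤ ‖(a - G)v‖`. The spectrum being a nonempty compact subset of `ℝ`, the
distance is attained at a real spectral point, which lies in `[a - |b|, a + |b|]`.
-/

open Metric ComplexConjugate

theorem IsSelfAdjoint.algebraMap_infDist_sq_le {A : Type*} [CStarAlgebra A] [PartialOrder A]
    [StarOrderedRing A] {a : A} (ha : IsSelfAdjoint a) (r : ℝ) :
    algebraMap ℝ A (infDist (r : ℂ) (spectrum ℂ a) ^ 2) ≤ (a - algebraMap ℝ A r) ^ 2 := by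
  have hcfc : (a - algebraMap ℝ A r) ^ 2 = cfc (fun x : ℝ => (x - r) ^ 2) a := by
    rw [cfc_pow _ _ a, cfc_sub _ _ a, cfc_id' ℝ a, cfc_const r a]
  rw [algebraMap_le_iff_le_spectrum ((ha.sub (.algebraMap A (.all r))).pow 2), hcfc,
    cfc_map_spectrum _ a]
  rintro _ ⟨x, hx, rfl⟩
  have hdist : infDist (r : ℂ) (spectrum ℂ a) ≤ |r - x| := by
    rw [← Real.dist_eq, ← Complex.isometry_ofReal.dist_eq]
    exact infDist_le_dist_of_mem (spectrum.algebraMap_mem ℂ hx)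
  simpa [sq_abs, sq_abs (r - x), sub_sq_comm] using pow_le_pow_left₀ infDist_nonneg hdist 2

theorem ContinuousLinearMap.mul_norm_sq_le_norm_apply_sq {H : Type*} [NormedAddCommGroup H]
    [InnerProductSpace ℂ H] [CompleteSpace H] {T : H →L[ℂ] H} {c : ℝ}
    (h : algebraMap ℝ (H →L[ℂ] H) c ≤ star T * T) (v : H) : c * ‖v‖ ^ 2 ≤ ‖T v‖ ^ 2 := by
  have hpos := ((le_def _ _).mp h).re_inner_nonneg_left v
  rw [apply_norm_sq_eq_inner_adjoint_left, ← star_eq_adjoint, ← mul_def]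
  simpa [inner_sub_left, Algebra.algebraMap_eq_smul_one, ← Complex.coe_smul, inner_smul_left,
    ← Complex.ofReal_pow] using hpos

theorem IsSelfAdjoint.infDist_spectrum_mul_norm_le {H : Type*} [NormedAddCommGroup H]
    [InnerProductSpace ℂ H] [CompleteSpace H] {G : H →L[ℂ] H} (hG : IsSelfAdjoint G) (r : ℝ)
    (v : H) : infDist (r : ℂ) (spectrum ℂ G) * ‖v‖ ≤ ‖(r : ℂ) • v - G v‖ := by
  set T := G - algebraMap ℝ (H →L[ℂ] H) r
  have hT : IsSelfAdjoint T := hG.sub (.algebraMap _ (.all r))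
  have hle : algebraMap ℝ (H →L[ℂ] H) (infDist (r : ℂ) (spectrum ℂ G) ^ 2) ≤ star T * T := by
    rw [hT.star_eq, ← sq]
    exact hG.algebraMap_infDist_sq_le r
  have hTv : ‖(r : ℂ) • v - G v‖ = ‖T v‖ := by
    rw [norm_sub_rev]
    simp [T, Algebra.algebraMap_eq_smul_one, ← Complex.coe_smul]
  rw [hTv, ← pow_le_pow_iff_left₀ (mul_nonneg infDist_nonneg (norm_nonneg _)) (norm_nonneg _)
    two_ne_zero, mul_pow]
  exact ContinuousLinearMap.mul_norm_sq_le_norm_apply_sq hle v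

theorem IsSelfAdjoint.exists_mem_spectrum_dist_eq_infDist {A : Type*} [CStarAlgebra A]
    [Nontrivial A] {a : A} (ha : IsSelfAdjoint a) (r : ℝ) :
    ∃ x : ℝ, (x : ℂ) ∈ spectrum ℂ a ∧ dist x r = infDist (r : ℂ) (spectrum ℂ a) := by
  obtain ⟨z, hz, hzd⟩ := (spectrum.isCompact a).exists_infDist_eq_dist (spectrum.nonempty a) r
  refine ⟨z.re, ha.mem_spectrum_eq_re hz ▸ hz, ?_⟩
  rw [hzd, dist_comm, ← Complex.isometry_ofReal.dist_eq, ← ha.mem_spectrum_eq_re hz]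

theorem re_inner_add_smul_I_sub_smul_I {E : Type*} [NormedAddCommGroup E]
    [InnerProductSpace ℂ E] (x y : E) (b : ℝ) :
    (inner ℂ (x + (b * Complex.I) • y) (x - (b * Complex.I) • y)).re =
      ‖x‖ ^ 2 - b ^ 2 * ‖y‖ ^ 2 := by
  have him : (inner ℂ y x).im = -(inner ℂ x y).im := by
    rw [← inner_conj_symm, Complex.conj_im]
  simp only [inner_add_left, inner_sub_right, inner_smul_left, inner_smul_right,
    inner_self_eq_norm_sq_to_K]
  simp only [Complex.coe_algebraMap, map_mul, Complex.conj_ofReal, Complex.conj_I, mul_neg,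
    neg_mul, Complex.sub_re, Complex.add_re, Complex.neg_re, Complex.mul_re, Complex.ofReal_re,
    Complex.I_re, mul_zero, Complex.ofReal_im, Complex.I_im, mul_one, sub_self, zero_mul,
    Complex.mul_im, add_zero, him, sub_neg_eq_add, zero_add, zero_sub, neg_neg, Complex.add_im,
    Complex.neg_im]
  norm_cast
  ring

theorem stmt0_general {H : Type*} [NormedAddCommGroup H] [InnerProductSpace ℂ H] [CompleteSpace H]
    (G : H →L[ℂ] H) (hG : IsSelfAdjoint G)
    (L : Submodule ℂ H)
    (lam : ℂ)
    (v : H) (hvL : v ∈ L) (hv : v ≠ 0)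
    (hweak : ∀ w ∈ L,
      (inner ℂ (lam • v - G v) ((starRingEnd ℂ) lam • w - G w) : ℂ) = 0) :
    Metric.infDist ((lam.re : ℂ)) (spectrum ℂ G) ≤ |lam.im| ∧
      ∃ x : ℝ, (x : ℂ) ∈ spectrum ℂ G ∧
        x ∈ Set.Icc (lam.re - |lam.im|) (lam.re + |lam.im|) := by
  have : Nontrivial H := ⟨v, 0, hv⟩
  set X := (lam.re : ℂ) • v - G v with hXdef
  have hlam : lam • v - G v = X + (lam.im * Complex.I) • v := by
    conv_lhs => rw [← Complex.re_add_im lam]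
    rw [add_smul, hXdef]; abel
  have hconj : conj lam • v - G v = X - (lam.im * Complex.I) • v := by
    have : conj lam = lam.re - lam.im * Complex.I := by apply Complex.ext <;> simp
    rw [this, sub_smul, hXdef]; abel
  have hX : ‖X‖ = |lam.im| * ‖v‖ := by
    have h := congrArg Complex.re (hweak v hvL)
    rw [hlam, hconj, re_inner_add_smul_I_sub_smul_I, Complex.zero_re, sub_eq_zero] at h
    rw [← sq_eq_sq₀ (norm_nonneg _) (by positivity), h, mul_pow, sq_abs]
  have hdist : infDist (lam.re : ℂ) (spectrum ℂ G) ≤ |lam.im| :=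
    le_of_mul_le_mul_right (hX ▸ hG.infDist_spectrum_mul_norm_le lam.re v) (norm_pos_iff.2 hv)
  obtain ⟨x, hx, hxd⟩ := hG.exists_mem_spectrum_dist_eq_infDist lam.re
  refine ⟨hdist, x, hx, ?_⟩
  rwa [← Real.closedBall_eq_Icc, mem_closedBall, hxd]

/-- Non-pollution part of the quadratic projection method: if λ with Im λ ≠ 0 is in the
second order spectrum of a self-adjoint operator `G` relative to a finite-dimensional
subspace `L`, then `dist(Re λ, Spec G) ≤ |Im λ|`; in particular the interval
`[Re λ - |Im λ|, Re λ + |Im λ|]` meets the spectrum of `G`. -/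
theorem stmt0 {H : Type*} [NormedAddCommGroup H] [InnerProductSpace ℂ H] [CompleteSpace H]
    (G : H →L[ℂ] H) (hG : IsSelfAdjoint G)
    (L : Submodule ℂ H) (hL : FiniteDimensional ℂ L)
    (lam : ℂ) (hlam : lam.im ≠ 0)
    (v : H) (hvL : v ∈ L) (hv : v ≠ 0)
    (hweak : ∀ w ∈ L,
      (inner ℂ (lam • v - G v) ((starRingEnd ℂ) lam • w - G w) : ℂ) = 0) :
    Metric.infDist ((lam.re : ℂ)) (spectrum ℂ G) ≤ |lam.im| ∧
      ∃ x : ℝ, (x : ℂ) ∈ spectrum ℂ G ∧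
        x ∈ Set.Icc (lam.re - |lam.im|) (lam.re + |lam.im|) :=
  stmt0_general G hG L lam v hvL hv hweak
end

section
/- Let G be self-adjoint, E an isolated eigenvalue of G with eigenspace E_sp and spectral-gap distance d_E = dist(E, Spec(G) \ {E}) > 0. Let λ ∈ ℂ and nonzero v ∈ Dom(G) satisfy ‖(Re λ - G)v‖ = |Im λ|·‖v‖ and Im λ · ⟨(Re λ - G)v, v⟩ = 0 with Im λ ≠ 0. Then ‖(E - G)v‖² = |E - λ|² ‖v‖², and if Π denotes the orthogonal projection onto the eigenspace of E, then ‖v - Πv‖ ≤ (|E - λ| / d_E) ‖v‖. -/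
/-!
Writing `(E - G)v = (E - Re λ)v + (Re λ - G)v`, the two summands are orthogonal by the second
hypothesis, so Pythagoras and the first hypothesis give `‖(E - G)v‖ = |E - λ| ‖v‖`.

For the projection bound, pick a continuous bump `χ` with `χ E = 1` that vanishes on the rest of
the spectrum. Then `(E - x)² + d² χ x ≥ d²` on `Spec G`, so by the continuous functional calculus
`(E - G)² + d² χ(G) ≥ d²` as operators, while `χ(G)` maps into the eigenspace. Testing this
inequality against `w = v - Πv ⊥ Esp` kills the `χ(G)` term and gives `d ‖w‖ ≤ ‖(E - G)w‖`,
and `(E - G)w = (E - G)v`.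
-/

theorem infDist_le_abs_sub_of_mem_spectrum {A : Type*} [Ring A] [Algebra ℂ A] [Algebra ℝ A]
    [IsScalarTower ℝ ℂ A] {a : A} {x : ℝ} (hx : x ∈ spectrum ℝ a) (E : ℝ) (hxE : x ≠ E) :
    Metric.infDist (E : ℂ) (spectrum ℂ a \ {(E : ℂ)}) ≤ |x - E| := by
  have hmem : (x : ℂ) ∈ spectrum ℂ a \ {(E : ℂ)} :=
    ⟨spectrum.algebraMap_mem ℂ hx, by simpa using hxE⟩
  calc Metric.infDist (E : ℂ) (spectrum ℂ a \ {(E : ℂ)}) ≤ dist (E : ℂ) x :=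
        Metric.infDist_le_dist_of_mem hmem
    _ = |x - E| := by
      rw [Complex.dist_eq, ← Complex.ofReal_sub, Complex.norm_real, Real.norm_eq_abs, abs_sub_comm]

theorem exists_continuous_eq_one_eq_zero_of_le_abs_sub (E : ℝ) {d : ℝ} (hd : 0 < d) :
    ∃ χ : ℝ → ℝ, Continuous χ ∧ χ E = 1 ∧ ∀ x, d ≤ |x - E| → χ x = 0 := by
  refine ⟨fun x => max 0 (1 - |x - E| / d), by fun_prop, by simp, fun x hx => ?_⟩
  have : 1 - |x - E| / d ≤ 0 := by rw [sub_nonpos, le_div_iff₀ hd]; linarith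
  exact max_eq_left this

section CStarAlgebra

variable {A : Type*} [CStarAlgebra A] {a : A} {χ : ℝ → ℝ} {E : ℝ}

theorem mul_cfc_eq_smul_cfc_of_eqOn_zero (ha : IsSelfAdjoint a)
    (hχ : ContinuousOn χ (spectrum ℝ a)) (hχ0 : ∀ x ∈ spectrum ℝ a, x ≠ E → χ x = 0) :
    a * cfc χ a = E • cfc χ a := by
  rw [← cfc_const_mul E χ a]
  nth_rw 1 [← cfc_id' ℝ a ha]
  rw [← cfc_mul (fun x => x) χ a]
  refine cfc_congr fun x hx => ?_
  by_cases hxE : x = E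
  · rw [hxE]
  · simp [hχ0 x hx hxE]

theorem algebraMap_sq_le_sq_add_smul_cfc [PartialOrder A] [StarOrderedRing A]
    (ha : IsSelfAdjoint a) {d : ℝ} (hd : 0 ≤ d) (hχ : ContinuousOn χ (spectrum ℝ a)) (hχE : χ E = 1)
    (hχ0 : ∀ x ∈ spectrum ℝ a, x ≠ E → χ x = 0)
    (hgap : ∀ x ∈ spectrum ℝ a, x ≠ E → d ≤ |x - E|) :
    algebraMap ℝ A (d ^ 2) ≤ (algebraMap ℝ A E - a) ^ 2 + d ^ 2 • cfc χ a := by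
  have hcfc : cfc (fun x => (E - x) ^ 2 + d ^ 2 * χ x) a
      = (algebraMap ℝ A E - a) ^ 2 + d ^ 2 • cfc χ a := by
    rw [cfc_add .., cfc_const_mul .., cfc_pow .., cfc_sub .., cfc_const E a, cfc_id' ℝ a]
  rw [← hcfc]
  refine algebraMap_le_cfc _ _ a fun x hx => ?_
  by_cases hxE : x = E
  · simp [hxE, hχE]
  · rw [hχ0 x hx hxE, mul_zero, add_zero, ← sq_abs (E - x), abs_sub_comm E x]
    exact pow_le_pow_left₀ hd (hgap x hx hxE) 2

end CStarAlgebra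

section HilbertSpace

variable {H : Type*} [NormedAddCommGroup H] [InnerProductSpace ℂ H]

theorem norm_ofReal_smul_sub_sq_of_inner_eq_zero {v w : H} {lam : ℂ} (E : ℝ)
    (h1 : ‖(lam.re : ℂ) • v - w‖ = |lam.im| * ‖v‖)
    (h2 : inner ℂ ((lam.re : ℂ) • v - w) v = 0) :
    ‖(E : ℂ) • v - w‖ ^ 2 = ‖(E : ℂ) - lam‖ ^ 2 * ‖v‖ ^ 2 := by
  have hsplit : (E : ℂ) • v - w = ((E - lam.re : ℝ) : ℂ) • v + ((lam.re : ℂ) • v - w) := by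
    push_cast
    module
  have horth : inner ℂ (((E - lam.re : ℝ) : ℂ) • v) ((lam.re : ℂ) • v - w) = 0 := by
    rw [inner_smul_left, ← inner_conj_symm, h2, map_zero, mul_zero]
  have hlam : ‖(E : ℂ) - lam‖ ^ 2 = (E - lam.re) ^ 2 + lam.im ^ 2 := by
    rw [Complex.sq_norm, Complex.normSq_apply]
    simp only [Complex.sub_re, Complex.sub_im, Complex.ofReal_re, Complex.ofReal_im]
    ring
  rw [hsplit, sq, norm_add_sq_eq_norm_sq_add_norm_sq_of_inner_eq_zero _ _ horth, norm_smul, h1,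
    Complex.norm_real, Real.norm_eq_abs, hlam]
  nlinarith [sq_abs (E - lam.re), sq_abs lam.im]

variable [CompleteSpace H]

theorem mul_norm_le_norm_smul_sub_apply_of_mem_orthogonal {G : H →L[ℂ] H} (hG : IsSelfAdjoint G)
    {E d : ℝ} (hd : 0 < d) (hgap : ∀ x ∈ spectrum ℝ G, x ≠ E → d ≤ |x - E|)
    {Esp : Submodule ℂ H} (hEsp : ∀ x : H, x ∈ Esp ↔ G x = (E : ℂ) • x)
    {w : H} (hw : w ∈ Espᗮ) :
    d * ‖w‖ ≤ ‖(E : ℂ) • w - G w‖ := by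
  obtain ⟨χ, hχ, hχE, hχ0⟩ := exists_continuous_eq_one_eq_zero_of_le_abs_sub E hd
  have hχ0' : ∀ x ∈ spectrum ℝ G, x ≠ E → χ x = 0 := fun x hx hxE => hχ0 x (hgap x hx hxE)
  set P := cfc χ G
  set K := algebraMap ℝ (H →L[ℂ] H) E - G
  have hPw : P w ∈ Esp := by
    rw [hEsp, Complex.coe_smul]
    exact congr($(mul_cfc_eq_smul_cfc_of_eqOn_zero hG hχ.continuousOn hχ0') w)
  have hKw : K w = (E : ℂ) • w - G w := by
    simp [K, Algebra.algebraMap_eq_smul_one, ← Complex.coe_smul]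
  have hK : IsSelfAdjoint K := (IsSelfAdjoint.algebraMap _ (.all E)).sub hG
  have hle := algebraMap_sq_le_sq_add_smul_cfc hG hd.le hχ.continuousOn hχE hχ0' hgap
  have hpos := ((ContinuousLinearMap.le_def _ _).1 hle).re_inner_nonneg_left w
  have hform : RCLike.re (inner ℂ ((K ^ 2 + d ^ 2 • P - algebraMap ℝ (H →L[ℂ] H) (d ^ 2)) w) w)
      = ‖K w‖ ^ 2 - d ^ 2 * ‖w‖ ^ 2 := by
    rw [ContinuousLinearMap.apply_norm_sq_eq_inner_adjoint_left, hK.adjoint_eq]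
    simp [Algebra.algebraMap_eq_smul_one, sq, (Submodule.mem_orthogonal Esp w).1 hw _ hPw]
  rw [← hKw, ← pow_le_pow_iff_left₀ (by positivity) (norm_nonneg _) two_ne_zero]
  linarith

theorem mul_norm_sub_starProjection_le {G : H →L[ℂ] H} (hG : IsSelfAdjoint G)
    {E d : ℝ} (hd : 0 < d) (hgap : ∀ x ∈ spectrum ℝ G, x ≠ E → d ≤ |x - E|)
    {Esp : Submodule ℂ H} [Esp.HasOrthogonalProjection]
    (hEsp : ∀ x : H, x ∈ Esp ↔ G x = (E : ℂ) • x) (v : H) :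
    d * ‖v - Esp.starProjection v‖ ≤ ‖(E : ℂ) • v - G v‖ := by
  have hGp : G (Esp.starProjection v) = (E : ℂ) • Esp.starProjection v :=
    (hEsp _).1 (Esp.starProjection_apply_mem v)
  have hres : (E : ℂ) • (v - Esp.starProjection v) - G (v - Esp.starProjection v)
      = (E : ℂ) • v - G v := by
    rw [map_sub, hGp, smul_sub, sub_sub_sub_cancel_right]
  rw [← hres]
  exact mul_norm_le_norm_smul_sub_apply_of_mem_orthogonal hG hd hgap hEsp
    (Esp.sub_starProjection_mem_orthogonal v)

end HilbertSpace

theorem stmt2_general {H : Type*} [NormedAddCommGroup H] [InnerProductSpace ℂ H] [CompleteSpace H]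
    (G : H →L[ℂ] H) (hG : IsSelfAdjoint G)
    (E : ℝ)
    (Esp : Submodule ℂ H) [Esp.HasOrthogonalProjection]
    (hEsp : ∀ x : H, x ∈ Esp ↔ G x = (E : ℂ) • x)
    (dE : ℝ) (hdE : dE = Metric.infDist ((E : ℂ)) (spectrum ℂ G \ {(E : ℂ)}))
    (hdEpos : 0 < dE)
    (lam : ℂ) (hlam : lam.im ≠ 0) (v : H)
    (h1 : ‖(lam.re : ℂ) • v - G v‖ = |lam.im| * ‖v‖)
    (h2 : (lam.im : ℂ) * (inner ℂ ((lam.re : ℂ) • v - G v) v : ℂ) = 0) :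
    ‖(E : ℂ) • v - G v‖ ^ 2 = ‖(E : ℂ) - lam‖ ^ 2 * ‖v‖ ^ 2 ∧
      ‖v - (Esp.orthogonalProjectionOnto v : H)‖ ≤ (‖(E : ℂ) - lam‖ / dE) * ‖v‖ := by
  have hgap : ∀ x ∈ spectrum ℝ G, x ≠ E → dE ≤ |x - E| := fun x hx hxE =>
    hdE ▸ infDist_le_abs_sub_of_mem_spectrum hx E hxE
  have hsq := norm_ofReal_smul_sub_sq_of_inner_eq_zero E h1
    ((mul_eq_zero.1 h2).resolve_left (by exact_mod_cast hlam))
  refine ⟨hsq, ?_⟩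
  have hnorm : ‖(E : ℂ) • v - G v‖ = ‖(E : ℂ) - lam‖ * ‖v‖ := by
    rwa [← mul_pow, pow_left_inj₀ (norm_nonneg _) (by positivity) two_ne_zero] at hsq
  rw [div_mul_eq_mul_div, le_div_iff₀ hdEpos, mul_comm, ← hnorm]
  exact mul_norm_sub_starProjection_le hG hdEpos hgap hEsp v

/-- Eigenfunction approximation identity: if `E` is an isolated eigenvalue of the
self-adjoint operator `G`, with eigenspace `Esp` and spectral gap `dE > 0`, and the
nonzero vector `v` satisfies `‖(Re λ - G)v‖ = |Im λ| ‖v‖` and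
`Im λ ⟨(Re λ - G)v, v⟩ = 0` with `Im λ ≠ 0`, then `‖(E - G)v‖² = |E - λ|² ‖v‖²` and
`‖v - Πv‖ ≤ (|E - λ|/dE) ‖v‖` for `Π` the orthogonal projection onto `Esp`. -/
theorem stmt2 {H : Type*} [NormedAddCommGroup H] [InnerProductSpace ℂ H] [CompleteSpace H]
    (G : H →L[ℂ] H) (hG : IsSelfAdjoint G)
    (E : ℝ) (hE : (E : ℂ) ∈ spectrum ℂ G)
    (hEiso : ∃ U : Set ℂ, IsOpen U ∧ (E : ℂ) ∈ U ∧ U ∩ spectrum ℂ G = {(E : ℂ)})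
    (Esp : Submodule ℂ H) [Esp.HasOrthogonalProjection]
    (hEsp : ∀ x : H, x ∈ Esp ↔ G x = (E : ℂ) • x)
    (hEev : Esp ≠ ⊥)
    (dE : ℝ) (hdE : dE = Metric.infDist ((E : ℂ)) (spectrum ℂ G \ {(E : ℂ)}))
    (hdEpos : 0 < dE)
    (lam : ℂ) (hlam : lam.im ≠ 0) (v : H) (hv : v ≠ 0)
    (h1 : ‖(lam.re : ℂ) • v - G v‖ = |lam.im| * ‖v‖)
    (h2 : (lam.im : ℂ) * (inner ℂ ((lam.re : ℂ) • v - G v) v : ℂ) = 0) :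
    ‖(E : ℂ) • v - G v‖ ^ 2 = ‖(E : ℂ) - lam‖ ^ 2 * ‖v‖ ^ 2 ∧
      ‖v - (Esp.orthogonalProjectionOnto v : H)‖ ≤ (‖(E : ℂ) - lam‖ / dE) * ‖v‖ :=
  stmt2_general G hG E Esp hEsp dE hdE hdEpos lam hlam v h1 h2
end

section
/- With I(m,n) = (cₘ cₙ)^{-1} ∫₀^∞ hₘ(r) hₙ(r) e^{-r²} dr and P(n) = ∏_{l=1}^n (1 + 1/(2l)) (with P(0)=1), one has for m = 2k, n = 2j+1: I(2k, 2j+1) = (-1)^{k-j+1} √(2 P(k) P(j)) / ((2k - 2j - 1) √(π (2k+1))). -/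
open Polynomial MeasureTheory

/-- Physicists' Hermite polynomials, `h₀ = 1`, `h_{n+1}(x) = 2x hₙ(x) - hₙ'(x)`. -/
noncomputable def physHermite : ℕ → Polynomial ℝ
  | 0 => 1
  | n + 1 => C 2 * X * physHermite n - derivative (physHermite n)

/-- Normalisation constants `cₙ = √(2^{n-1} n! √π)`. -/
noncomputable def hermC (n : ℕ) : ℝ :=
  Real.sqrt ((2 : ℝ) ^ ((n : ℝ) - 1) * n.factorial * Real.sqrt Real.pi)

/-- Normalised odd Hermite functions `Φₖ(r) = c_{2k+1}⁻¹ h_{2k+1}(r) e^{-r²/2}`. -/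
noncomputable def PhiFn (k : ℕ) (r : ℝ) : ℝ :=
  (hermC (2 * k + 1))⁻¹ * (physHermite (2 * k + 1)).eval r * Real.exp (-r ^ 2 / 2)

/-- `P(n) = ∏_{l=1}^n (1 + 1/(2l))`, `P(0) = 1`. -/
noncomputable def Pprod (n : ℕ) : ℝ :=
  ∏ l ∈ Finset.range n, (1 + 1 / (2 * ((l : ℝ) + 1)))

/-!
The Hermite polynomials satisfy `hₙ'' - 2x hₙ' = -2n hₙ`, so the weighted Wronskian
`W = e^{-x²} (hₘ hₙ' - hₙ hₘ')` has derivative `2(m - n) hₘ hₙ e^{-x²}`. Integrating over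
`(0, ∞)` gives `2(m - n) ∫₀^∞ hₘ hₙ e^{-x²} = -W(0)`, and for `m = 2k`, `n = 2j + 1` the boundary
term is read off from `h_{2k}(0) = (-1)ᵏ (2k)!/k!`, `h_{2j+1}(0) = 0` and `hₙ' = 2n h_{n-1}`.
What remains is to match the normalisation, using `P(n) = (2n+1)!/(4ⁿ n!²)`.
-/

open Real Filter Set Topology Nat

lemma derivative_physHermite_succ (n : ℕ) :
    derivative (physHermite (n + 1)) = C (2 * (n + 1) : ℝ) * physHermite n := by
  induction n with
  | zero => simp [physHermite]
  | succ n ih =>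
    rw [physHermite, derivative_sub, derivative_mul, derivative_mul, ih, physHermite]
    simp only [derivative_C, derivative_X, derivative_mul, zero_mul, zero_add, mul_one, map_mul,
      map_add, map_one, Nat.cast_add, Nat.cast_one, map_natCast, derivative_natCast,
      derivative_one]
    ring

lemma derivative_derivative_physHermite (n : ℕ) :
    derivative (derivative (physHermite n)) =
      C 2 * X * derivative (physHermite n) - C (2 * n : ℝ) * physHermite n := by
  have h := derivative_physHermite_succ n
  rw [physHermite, derivative_sub, derivative_mul, derivative_mul] at h
  simp only [derivative_C, derivative_X, zero_mul, zero_add, mul_one, map_mul, map_add,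
    map_one] at h ⊢
  linear_combination -h

lemma physHermite_add_two_eval_zero (n : ℕ) :
    (physHermite (n + 2)).eval 0 = -(2 * (n + 1)) * (physHermite n).eval 0 := by
  rw [physHermite, derivative_physHermite_succ]
  simp

lemma physHermite_even_eval_zero (k : ℕ) :
    (physHermite (2 * k)).eval 0 = (-1) ^ k * (2 * k)! / k ! := by
  induction k with
  | zero => simp [physHermite]
  | succ k ih =>
    rw [show 2 * (k + 1) = 2 * k + 2 by ring, physHermite_add_two_eval_zero, ih,
      Nat.factorial_succ, Nat.factorial_succ, Nat.factorial_succ]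
    push_cast
    field_simp
    ring

lemma physHermite_odd_eval_zero (k : ℕ) : (physHermite (2 * k + 1)).eval 0 = 0 := by
  induction k with
  | zero => simp [physHermite]
  | succ k ih =>
    rw [show 2 * (k + 1) + 1 = 2 * k + 1 + 2 by ring, physHermite_add_two_eval_zero, ih, mul_zero]

lemma integrableOn_Ioi_eval_mul_exp_neg_sq (p : ℝ[X]) :
    IntegrableOn (fun x ↦ p.eval x * exp (-x ^ 2)) (Ioi 0) := by
  induction p using Polynomial.induction_on' with
  | add p q hp hq =>
    exact (hp.add hq).congr_fun (fun x _ ↦ by simp only [Pi.add_apply, eval_add, add_mul])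
      measurableSet_Ioi
  | monomial i c =>
    refine IntegrableOn.congr_fun ((integrableOn_rpow_mul_exp_neg_mul_sq one_pos
      (by linarith [i.cast_nonneg (α := ℝ)] : (-1 : ℝ) < i)).const_mul c)
      (fun x _ ↦ ?_) measurableSet_Ioi
    simp [mul_assoc]

lemma tendsto_eval_mul_exp_neg_sq_atTop (p : ℝ[X]) :
    Tendsto (fun x ↦ p.eval x * exp (-x ^ 2)) atTop (𝓝 0) := by
  have h_exp : Tendsto (fun x : ℝ ↦ exp (x - x ^ 2)) atTop (𝓝 0) :=
    tendsto_exp_atBot.comp <| tendsto_atBot_mono' atTop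
      (by filter_upwards [eventually_ge_atTop (2 : ℝ)] with x hx; nlinarith)
      (tendsto_neg_atTop_atBot)
  simpa only [mul_zero] using (p.tendsto_div_exp_atTop.mul h_exp).congr fun x ↦ by
    rw [div_mul_eq_mul_div, div_eq_iff (exp_ne_zero _), mul_assoc, ← exp_add]
    ring_nf

lemma integral_Ioi_derivative_sub_mul_exp_neg_sq (p : ℝ[X]) :
    ∫ x in Ioi 0, (derivative p - C 2 * X * p).eval x * exp (-x ^ 2) = -p.eval 0 := by
  have h_deriv : ∀ x ∈ Ici (0 : ℝ), HasDerivAt (fun x ↦ p.eval x * exp (-x ^ 2))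
      ((derivative p - C 2 * X * p).eval x * exp (-x ^ 2)) x := fun x _ ↦ by
    refine ((p.hasDerivAt x).fun_mul (hasDerivAt_pow 2 x).fun_neg.exp).congr_deriv ?_
    simp only [eval_sub, eval_mul, eval_C, eval_X]
    ring
  rw [integral_Ioi_of_hasDerivAt_of_tendsto' h_deriv (integrableOn_Ioi_eval_mul_exp_neg_sq _)
    (tendsto_eval_mul_exp_neg_sq_atTop p)]
  norm_num

lemma derivative_wronskian_physHermite (m n : ℕ) :
    derivative (physHermite m * derivative (physHermite n) -
        physHermite n * derivative (physHermite m)) -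
      C 2 * X * (physHermite m * derivative (physHermite n) -
        physHermite n * derivative (physHermite m)) =
      C (2 * ((m : ℝ) - n)) * (physHermite m * physHermite n) := by
  simp only [derivative_mul, derivative_derivative_physHermite, map_mul, map_sub]
  ring

lemma integral_Ioi_physHermite_mul_physHermite (m n : ℕ) :
    2 * ((m : ℝ) - n) *
        ∫ x in Ioi 0, (physHermite m).eval x * (physHermite n).eval x * exp (-x ^ 2) =
      (physHermite n).eval 0 * (derivative (physHermite m)).eval 0 -
        (physHermite m).eval 0 * (derivative (physHermite n)).eval 0 := by
  have h := integral_Ioi_derivative_sub_mul_exp_neg_sq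
    (physHermite m * derivative (physHermite n) - physHermite n * derivative (physHermite m))
  rw [derivative_wronskian_physHermite] at h
  simp only [eval_mul, eval_C, eval_sub, mul_assoc] at h
  rw [← integral_const_mul]
  simp only [mul_assoc]
  linarith

lemma integral_Ioi_physHermite_even_mul_odd (k j : ℕ) :
    ∫ x in Ioi 0, (physHermite (2 * k)).eval x * (physHermite (2 * j + 1)).eval x * exp (-x ^ 2) =
      (-1) ^ (k + j + 1) * ((2 * k)! / k !) * ((2 * j + 1)! / j !) /
        (2 * (k : ℝ) - 2 * j - 1) := by
  have h := integral_Ioi_physHermite_mul_physHermite (2 * k) (2 * j + 1)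
  rw [physHermite_odd_eval_zero, derivative_physHermite_succ, eval_mul, eval_C,
    physHermite_even_eval_zero, physHermite_even_eval_zero] at h
  have h_odd : 2 * (k : ℝ) - 2 * j - 1 ≠ 0 := by
    exact_mod_cast (by omega : 2 * (k : ℤ) - 2 * j - 1 ≠ 0)
  rw [eq_div_iff h_odd, Nat.factorial_succ]
  push_cast at h ⊢
  linear_combination h / 2

lemma Pprod_eq (n : ℕ) : Pprod n = (2 * n + 1)! / (4 ^ n * n ! ^ 2) := by
  induction n with
  | zero => simp [Pprod]
  | succ n ih =>
    rw [Pprod, Finset.prod_range_succ, ← Pprod, ih,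
      show 2 * (n + 1) + 1 = 2 * n + 1 + 1 + 1 by ring, Nat.factorial_succ (2 * n + 1 + 1),
      Nat.factorial_succ (2 * n + 1), Nat.factorial_succ n]
    push_cast
    field_simp
    ring

lemma hermC_pos (n : ℕ) : 0 < hermC n := Real.sqrt_pos.2 (by positivity)

lemma hermC_sq (n : ℕ) : hermC n ^ 2 = 2 ^ n * n ! * √π / 2 := by
  rw [hermC, sq_sqrt (by positivity), rpow_sub two_pos, rpow_one, rpow_natCast]
  ring

lemma factorial_ratio_div_hermC_mul (k j : ℕ) :
    (2 * k)! / k ! * ((2 * j + 1)! / j !) / (hermC (2 * k) * hermC (2 * j + 1)) =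
      √(2 * Pprod k * Pprod j) / √(π * (2 * k + 1)) := by
  have h_hermC := mul_pos (hermC_pos (2 * k)) (hermC_pos (2 * j + 1))
  rw [Pprod_eq, Pprod_eq, ← sqrt_div' _ (by positivity), eq_comm,
    sqrt_eq_iff_eq_sq (by positivity) (div_nonneg (by positivity) h_hermC.le),
    div_pow, mul_pow (hermC _), hermC_sq, hermC_sq, Nat.factorial_succ (2 * k)]
  have hπ := sq_sqrt pi_pos.le
  push_cast
  field_simp
  rw [hπ, pow_succ, pow_mul, pow_mul]
  ring

/-- Closed form of the mixed-parity normalised integral: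
`I(2k, 2j+1) = (-1)^{k-j+1} √(2 P(k) P(j)) / ((2k-2j-1) √(π(2k+1)))`. -/
theorem stmt13 (k j : ℕ) :
    (1 / (hermC (2 * k) * hermC (2 * j + 1))) *
        (∫ r in Set.Ioi (0 : ℝ),
          (physHermite (2 * k)).eval r * (physHermite (2 * j + 1)).eval r *
            Real.exp (-r ^ 2)) =
      (-1 : ℝ) ^ (k + j + 1) * Real.sqrt (2 * Pprod k * Pprod j) /
        ((2 * (k : ℝ) - 2 * (j : ℝ) - 1) * Real.sqrt (Real.pi * (2 * (k : ℝ) + 1))) := by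
  rw [integral_Ioi_physHermite_even_mul_odd, mul_div_mul_comm, ← factorial_ratio_div_hermC_mul]
  ring
end
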